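/- Let ρ be a d×d density matrix and let U₁,…,U_N (N ≥ 2) be d×d unitary matrices. Then ∑_{s=1}^{N} I_ρ(U_s) ≥ (1/(2N−2)) { ∑_{1≤s<t≤N} I_ρ(U_s + U_t) + (2/(N(N−1))) [ ∑_{1≤s<t≤N} √( I_ρ(U_s − U_t) ) ]² }. -/

import Mathlib

open Matrix Finset
open scoped ComplexOrder

/-- The positive semidefinite square root, as defined in the older Mathlib
(removed since; reinstated verbatim with its old definition). -/
noncomputable def Matrix.PosSemidef.sqrt {n : Type*} [Fintype n] [DecidableEq n]
    {A : Matrix n n ℂ} (hA : A.PosSemidef) : Matrix n n ℂ :=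
  hA.1.eigenvectorUnitary.1 * diagonal ((↑) ∘ (√·) ∘ hA.1.eigenvalues) *
  (star hA.1.eigenvectorUnitary : Matrix n n ℂ)

/-- Wigner–Yanase skew information `I_ρ(A) = (1/2) Tr([√ρ, A]† [√ρ, A])` of a matrix `A`
with respect to a positive semidefinite matrix `ρ`, where `√ρ = hρ.sqrt` is the positive
semidefinite square root of `ρ`. -/
noncomputable def skewInfo {d : ℕ} {ρ : Matrix (Fin d) (Fin d) ℂ} (hρ : ρ.PosSemidef)
    (A : Matrix (Fin d) (Fin d) ℂ) : ℝ :=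
  (1 / 2 : ℝ) *
    (((hρ.sqrt * A - A * hρ.sqrt)ᴴ * (hρ.sqrt * A - A * hρ.sqrt)).trace).re

/-!
`A ↦ I_ρ(A)` is half the squared Frobenius norm of the commutator `[√ρ, A]`, a quadratic form
coming from a linear map. Summing its parallelogram law over the pairs `s < t` gives
`∑ I_ρ(U_s + U_t) + ∑ I_ρ(U_s - U_t) = 2(N - 1) ∑ I_ρ(U_s)`, and Cauchy–Schwarz over the
`N(N - 1)/2` pairs bounds `(∑ √I_ρ(U_s - U_t))²` by `N(N - 1)/2 · ∑ I_ρ(U_s - U_t)`.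
-/

section PairSums

variable {ι : Type*} [LinearOrder ι] [Fintype ι] [LocallyFiniteOrderTop ι]
  [LocallyFiniteOrderBot ι]

theorem Finset.sum_sum_Ioi_add_eq_card_sub_one_smul {M : Type*} [AddCommMonoid M]
    (f : ι → M) :
    ∑ s, ∑ t ∈ Ioi s, (f s + f t) = (Fintype.card ι - 1) • ∑ s, f s := by
  rw [sum_sum_Ioi_add_eq_sum_sum_off_diag (fun _ t => f t), smul_sum]
  simp [card_compl]

theorem Finset.sum_card_Ioi_mul_two :
    (∑ s : ι, #(Ioi s)) * 2 = Fintype.card ι * (Fintype.card ι - 1) := by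
  have h := sum_sum_Ioi_add_eq_card_sub_one_smul (ι := ι) (fun _ => 1)
  simp only [sum_const, smul_eq_mul, mul_one, card_univ] at h
  rw [sum_mul, mul_comm, ← h]

theorem Finset.two_mul_sq_sum_sum_Ioi_le (g : ι → ι → ℝ) :
    2 * (∑ s, ∑ t ∈ Ioi s, g s t) ^ 2 ≤
      ((Fintype.card ι * (Fintype.card ι - 1) : ℕ) : ℝ) * ∑ s, ∑ t ∈ Ioi s, g s t ^ 2 := by
  have hcs := sq_sum_le_card_mul_sum_sq (s := univ.sigma fun s : ι => Ioi s)
    (f := fun p => g p.1 p.2)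
  rw [sum_sigma, sum_sigma, card_sigma] at hcs
  rw [← sum_card_Ioi_mul_two, Nat.cast_mul, Nat.cast_ofNat]
  linarith

end PairSums

theorem star_add_mul_add_add_star_sub_mul_sub {R : Type*} [Ring R] [StarRing R] (x y : R) :
    star (x + y) * (x + y) + star (x - y) * (x - y) = 2 * (star x * x) + 2 * (star y * y) := by
  simp only [star_add, star_sub]
  noncomm_ring

section SkewInfo

variable {d : ℕ} {ρ : Matrix (Fin d) (Fin d) ℂ} (hρ : ρ.PosSemidef)

theorem skewInfo_nonneg (A : Matrix (Fin d) (Fin d) ℂ) : 0 ≤ skewInfo hρ A := by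
  have h := (posSemidef_conjTranspose_mul_self (hρ.sqrt * A - A * hρ.sqrt)).trace_nonneg
  exact mul_nonneg (by norm_num) (Complex.nonneg_iff.1 h).1

theorem skewInfo_add_add_skewInfo_sub (A B : Matrix (Fin d) (Fin d) ℂ) :
    skewInfo hρ (A + B) + skewInfo hρ (A - B) = 2 * skewInfo hρ A + 2 * skewInfo hρ B := by
  simp only [skewInfo, ← star_eq_conjTranspose]
  set X := hρ.sqrt * A - A * hρ.sqrt
  set Y := hρ.sqrt * B - B * hρ.sqrt
  have hadd : hρ.sqrt * (A + B) - (A + B) * hρ.sqrt = X + Y := by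
    simp only [X, Y]; noncomm_ring
  have hsub : hρ.sqrt * (A - B) - (A - B) * hρ.sqrt = X - Y := by
    simp only [X, Y]; noncomm_ring
  have h := congrArg (fun M => M.trace.re) (star_add_mul_add_add_star_sub_mul_sub X Y)
  simp only [trace_add, Complex.add_re, two_mul] at h
  rw [hadd, hsub]
  linarith

end SkewInfo

theorem stmt_8_general {d N : ℕ} (hN : 2 ≤ N)
    (ρ : Matrix (Fin d) (Fin d) ℂ) (hρ : ρ.PosSemidef)
    (U : Fin N → Matrix (Fin d) (Fin d) ℂ) :
    ∑ s, skewInfo hρ (U s) ≥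
      (1 / (2 * (N : ℝ) - 2)) *
        ((∑ s : Fin N, ∑ t ∈ Finset.Ioi s, skewInfo hρ (U s + U t))
          + (2 / ((N : ℝ) * ((N : ℝ) - 1))) *
            (∑ s : Fin N, ∑ t ∈ Finset.Ioi s,
              Real.sqrt (skewInfo hρ (U s - U t))) ^ 2) := by
  set S := ∑ s, skewInfo hρ (U s)
  set P := ∑ s : Fin N, ∑ t ∈ Ioi s, skewInfo hρ (U s + U t)
  set M := ∑ s : Fin N, ∑ t ∈ Ioi s, skewInfo hρ (U s - U t)
  set Q := ∑ s : Fin N, ∑ t ∈ Ioi s, √(skewInfo hρ (U s - U t))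
  have hNR : (2 : ℝ) ≤ N := by exact_mod_cast hN
  have hPM : P + M = 2 * (N - 1) * S := by
    simp only [P, M, ← sum_add_distrib, skewInfo_add_add_skewInfo_sub,
      sum_sum_Ioi_add_eq_card_sub_one_smul, ← mul_sum, Fintype.card_fin, nsmul_eq_mul]
    push_cast [Nat.cast_sub (by omega : 1 ≤ N)]
    ring
  have hQM : 2 * Q ^ 2 ≤ N * (N - 1) * M := by
    have h := two_mul_sq_sum_sum_Ioi_le fun s t : Fin N => √(skewInfo hρ (U s - U t))
    simp only [Real.sq_sqrt (skewInfo_nonneg hρ _), Fintype.card_fin] at h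
    push_cast [Nat.cast_sub (by omega : 1 ≤ N)] at h
    exact h
  have hQ : 2 / (N * (N - 1)) * Q ^ 2 ≤ M := by
    rw [div_mul_eq_mul_div, div_le_iff₀ (by nlinarith)]
    linarith
  calc 1 / (2 * (N : ℝ) - 2) * (P + 2 / (N * (N - 1)) * Q ^ 2)
      ≤ 1 / (2 * (N : ℝ) - 2) * (P + M) := by
        gcongr
        exact one_div_nonneg.2 (by linarith)
    _ = S := by
        have hN1 : (N : ℝ) - 1 ≠ 0 := by linarith
        rw [hPM]
        field_simp

theorem stmt_8 {d N : ℕ} (hN : 2 ≤ N)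
    (ρ : Matrix (Fin d) (Fin d) ℂ) (hρ : ρ.PosSemidef) (htr : ρ.trace = 1)
    (U : Fin N → Matrix (Fin d) (Fin d) ℂ)
    (hU : ∀ s, U s ∈ Matrix.unitaryGroup (Fin d) ℂ) :
    ∑ s, skewInfo hρ (U s) ≥
      (1 / (2 * (N : ℝ) - 2)) *
        ((∑ s : Fin N, ∑ t ∈ Finset.Ioi s, skewInfo hρ (U s + U t))
          + (2 / ((N : ℝ) * ((N : ℝ) - 1))) *
            (∑ s : Fin N, ∑ t ∈ Finset.Ioi s,
              Real.sqrt (skewInfo hρ (U s - U t))) ^ 2) :=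
  stmt_8_general hN ρ hρ U
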